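/- In the general case, the Cayley-conjugated free transfer matrix satisfies C_N M⁻¹ 𝒯⁰ M C_N* = [[e^{ik}, 0, 0, 0],[0, u cosh γ, 0, u sinh γ],[0, 0, e^{−ik}, 0],[0, u sinh γ, 0, u cosh γ]] in four blocks of sizes s, N−s, s, N−s. -/

import Mathlib

/-!
Conjugating by `diag(U, U)` turns `𝒯⁰` into `[[diag(λ - E), -1], [1, 0]]`, which splits into
one `2 × 2` transfer matrix `[[λᵢ - E, -1], [1, 0]]` per eigenvalue, and the second factor of `M`
acts on each of these planes by a real matrix of determinant one. On an elliptic plane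
(`λ - E = 2 cos k`) it conjugates the transfer matrix to the rotation by `k`, on a hyperbolic one
(`λ - E = 2u cosh γ`) to `u diag(e^γ, e^{-γ})`; the Cayley matrix then turns the rotation into
`diag(e^{ik}, e^{-ik})` and `u diag(e^γ, e^{-γ})` into `u [[cosh γ, sinh γ], [sinh γ, cosh γ]]`.
-/

open Matrix

/-- The basis-change matrix M from the paper (eq. (18)), in four blocks of sizes
    s, h, s, h, built from the elliptic data k and hyperbolic data γ, u and the
    unitary U diagonalizing W. -/
noncomputable def Mmat (s h : ℕ) (k : Fin s → ℝ) (γ u : Fin h → ℝ)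
    (U : Matrix (Fin s ⊕ Fin h) (Fin s ⊕ Fin h) ℂ) :
    Matrix ((Fin s ⊕ Fin h) ⊕ (Fin s ⊕ Fin h)) ((Fin s ⊕ Fin h) ⊕ (Fin s ⊕ Fin h)) ℂ :=
  Matrix.fromBlocks U 0 0 U *
  Matrix.fromBlocks
    (Matrix.fromBlocks
      (Matrix.diagonal fun i => (((Real.sqrt (Real.sin (k i)))⁻¹ : ℝ) : ℂ)) 0 0
      (Matrix.diagonal fun j => ((u j * (Real.sqrt (2 * Real.sinh (γ j)))⁻¹ : ℝ) : ℂ)))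
    (Matrix.fromBlocks 0 0 0
      (Matrix.diagonal fun j => (((Real.sqrt (2 * Real.sinh (γ j)))⁻¹ : ℝ) : ℂ)))
    (Matrix.fromBlocks
      (Matrix.diagonal fun i =>
        ((Real.cos (k i) * (Real.sqrt (Real.sin (k i)))⁻¹ : ℝ) : ℂ)) 0 0
      (Matrix.diagonal fun j =>
        ((Real.exp (-γ j) * (Real.sqrt (2 * Real.sinh (γ j)))⁻¹ : ℝ) : ℂ)))
    (Matrix.fromBlocks
      (Matrix.diagonal fun i => ((Real.sqrt (Real.sin (k i)) : ℝ) : ℂ)) 0 0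
      (Matrix.diagonal fun j =>
        ((u j * Real.exp (γ j) * (Real.sqrt (2 * Real.sinh (γ j)))⁻¹ : ℝ) : ℂ)))

/-- The Cayley matrix C_N = (1/√2)[[1, i],[1, −i]] in N×N blocks (N = s + h). -/
noncomputable def CayleyN (s h : ℕ) :
    Matrix ((Fin s ⊕ Fin h) ⊕ (Fin s ⊕ Fin h)) ((Fin s ⊕ Fin h) ⊕ (Fin s ⊕ Fin h)) ℂ :=
  ((Real.sqrt 2 : ℂ)⁻¹) • Matrix.fromBlocks 1 (Complex.I • 1) 1 (-(Complex.I • 1))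

namespace Matrix

variable {m n R : Type*} [DecidableEq m] [DecidableEq n]

/-- Acts as `f x` on the plane spanned by `inl x` and `inr x`. -/
def fromBlocksDiagonal [Zero R] (f : n → Matrix (Fin 2) (Fin 2) R) : Matrix (n ⊕ n) (n ⊕ n) R :=
  fromBlocks (diagonal fun x => f x 0 0) (diagonal fun x => f x 0 1)
    (diagonal fun x => f x 1 0) (diagonal fun x => f x 1 1)

theorem fromBlocksDiagonal_mul [Fintype n] [Semiring R] (f g : n → Matrix (Fin 2) (Fin 2) R) :
    fromBlocksDiagonal f * fromBlocksDiagonal g = fromBlocksDiagonal (f * g) := by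
  simp only [fromBlocksDiagonal, fromBlocks_multiply, diagonal_mul_diagonal, diagonal_add,
    Pi.mul_apply, mul_apply, Fin.sum_univ_two]

theorem fromBlocksDiagonal_one [Zero R] [One R] :
    fromBlocksDiagonal (1 : n → Matrix (Fin 2) (Fin 2) R) = 1 := by
  simp [fromBlocksDiagonal, ← fromBlocks_one]

theorem fromBlocksDiagonal_conjTranspose [AddMonoid R] [StarAddMonoid R]
    (f : n → Matrix (Fin 2) (Fin 2) R) :
    (fromBlocksDiagonal f)ᴴ = fromBlocksDiagonal fun x => (f x)ᴴ := by
  simp only [fromBlocksDiagonal, fromBlocks_conjTranspose, diagonal_conjTranspose,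
    conjTranspose_apply]
  rfl

theorem fromBlocksDiagonal_sumElim [Zero R] (f : m → Matrix (Fin 2) (Fin 2) R)
    (g : n → Matrix (Fin 2) (Fin 2) R) :
    fromBlocksDiagonal (Sum.elim f g) =
      fromBlocks
        (fromBlocks (diagonal fun i => f i 0 0) 0 0 (diagonal fun j => g j 0 0))
        (fromBlocks (diagonal fun i => f i 0 1) 0 0 (diagonal fun j => g j 0 1))
        (fromBlocks (diagonal fun i => f i 1 0) 0 0 (diagonal fun j => g j 1 0))
        (fromBlocks (diagonal fun i => f i 1 1) 0 0 (diagonal fun j => g j 1 1)) := by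
  simp only [fromBlocksDiagonal, fromBlocks_diagonal]
  congr <;> ext (x | x) <;> rfl

def transferMatrix [Ring R] (t : R) : Matrix (Fin 2) (Fin 2) R := !![t, -1; 1, 0]

theorem transferMatrix_map {S : Type*} [Ring R] [Ring S] (φ : R →+* S) (t : R) :
    (transferMatrix t).map φ = transferMatrix (φ t) := by
  ext i j; fin_cases i <;> fin_cases j <;> simp [transferMatrix]

theorem fromBlocks_diagonal_neg_one_one_zero [Ring R] (t : n → R) :
    fromBlocks (diagonal t) (-1) 1 0 = fromBlocksDiagonal fun x => transferMatrix (t x) := by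
  simp [fromBlocksDiagonal, transferMatrix, ← diagonal_one, ← diagonal_zero]

variable [Fintype n] [CommRing R]

theorem isUnit_det_fromBlocksDiagonal {f : n → Matrix (Fin 2) (Fin 2) R}
    (hf : ∀ x, IsUnit (f x).det) : IsUnit (fromBlocksDiagonal f).det := by
  refine isUnit_det_of_left_inverse (B := fromBlocksDiagonal f⁻¹) ?_
  rw [fromBlocksDiagonal_mul, ← fromBlocksDiagonal_one]
  exact congrArg _ (funext fun x => nonsing_inv_mul _ (hf x))

theorem inv_mul_fromBlocksDiagonal_mul {S T Λ : n → Matrix (Fin 2) (Fin 2) R}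
    (hS : ∀ x, IsUnit (S x).det) (h : ∀ x, T x * S x = S x * Λ x) :
    (fromBlocksDiagonal S)⁻¹ * fromBlocksDiagonal T * fromBlocksDiagonal S =
      fromBlocksDiagonal Λ := by
  rw [mul_assoc, fromBlocksDiagonal_mul, show T * S = S * Λ from funext h,
    ← fromBlocksDiagonal_mul, ← mul_assoc, nonsing_inv_mul _ (isUnit_det_fromBlocksDiagonal hS),
    one_mul]

theorem inv_fromBlocks_zero_zero_of_mem_unitaryGroup [StarRing R] {U : Matrix n n R}
    (hU : U ∈ unitaryGroup n R) : (fromBlocks U 0 0 U)⁻¹ = fromBlocks Uᴴ 0 0 Uᴴ := by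
  refine inv_eq_left_inv ?_
  rw [fromBlocks_multiply, ← star_eq_conjTranspose, (mem_unitaryGroup_iff').1 hU]
  simp

theorem fromBlocks_unitary_conj_transfer [StarRing R] {U : Matrix n n R}
    (hU : U ∈ unitaryGroup n R) (d : n → R) (e : R) :
    (fromBlocks U 0 0 U)⁻¹ * fromBlocks (U * diagonal d * Uᴴ - e • 1) (-1) 1 0 *
        fromBlocks U 0 0 U =
      fromBlocks (diagonal fun x => d x - e) (-1) 1 0 := by
  have hUU : Uᴴ * U = 1 := by rw [← star_eq_conjTranspose]; exact (mem_unitaryGroup_iff').1 hU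
  have hX : Uᴴ * (U * diagonal d * Uᴴ - e • 1) * U = diagonal fun x => d x - e := by
    rw [Matrix.mul_sub, Matrix.sub_mul, ← mul_assoc, ← mul_assoc, hUU, Matrix.one_mul, mul_assoc,
      hUU, Matrix.mul_one, Matrix.mul_smul, Matrix.smul_mul, Matrix.mul_one, hUU,
      smul_one_eq_diagonal, diagonal_sub]
  rw [inv_fromBlocks_zero_zero_of_mem_unitaryGroup hU, fromBlocks_multiply, fromBlocks_multiply]
  simp only [Matrix.mul_zero, Matrix.zero_mul, add_zero, zero_add, Matrix.mul_neg,
    Matrix.neg_mul, Matrix.mul_one, hUU, hX, neg_zero]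

end Matrix

open Matrix Complex

namespace FreeTransfer

noncomputable def ellipticFrame (k : ℝ) : Matrix (Fin 2) (Fin 2) ℝ :=
  !![(√(Real.sin k))⁻¹, 0; Real.cos k * (√(Real.sin k))⁻¹, √(Real.sin k)]

noncomputable def ellipticForm (k : ℝ) : Matrix (Fin 2) (Fin 2) ℝ :=
  !![Real.cos k, -Real.sin k; Real.sin k, Real.cos k]

noncomputable def hyperbolicFrame (γ u : ℝ) : Matrix (Fin 2) (Fin 2) ℝ :=
  !![u * (√(2 * Real.sinh γ))⁻¹, (√(2 * Real.sinh γ))⁻¹;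
    Real.exp (-γ) * (√(2 * Real.sinh γ))⁻¹, u * Real.exp γ * (√(2 * Real.sinh γ))⁻¹]

noncomputable def hyperbolicForm (γ u : ℝ) : Matrix (Fin 2) (Fin 2) ℝ :=
  !![u * Real.exp γ, 0; 0, u * Real.exp (-γ)]

noncomputable def cayley : Matrix (Fin 2) (Fin 2) ℂ := ((√2 : ℝ) : ℂ)⁻¹ • !![1, I; 1, -I]

theorem det_ellipticFrame {k : ℝ} (hk : 0 < Real.sin k) : (ellipticFrame k).det = 1 := by
  rw [ellipticFrame, det_fin_two_of]
  field_simp [(Real.sqrt_pos.2 hk).ne']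
  ring

theorem transferMatrix_mul_ellipticFrame {k : ℝ} (hk : 0 < Real.sin k) :
    transferMatrix (2 * Real.cos k) * ellipticFrame k = ellipticFrame k * ellipticForm k := by
  have hv := (Real.sqrt_pos.2 hk).ne'
  have hv2 := Real.sq_sqrt hk.le
  rw [transferMatrix, ellipticFrame, ellipticForm, mul_fin_two, mul_fin_two]
  simp only [EmbeddingLike.apply_eq_iff_eq, vecCons_inj, and_true]
  refine ⟨⟨?_, ?_⟩, ?_, ?_⟩ <;> field_simp
  · ring
  · linear_combination -hv2
  · linear_combination -Real.sin_sq_add_cos_sq k - Real.sin k * hv2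
  · linear_combination -Real.cos k * hv2

theorem det_hyperbolicFrame {γ u : ℝ} (hγ : 0 < γ) (hu : u * u = 1) :
    (hyperbolicFrame γ u).det = 1 := by
  have hs : 0 < 2 * Real.sinh γ := by linarith [Real.sinh_pos_iff.2 hγ]
  rw [hyperbolicFrame, det_fin_two_of]
  field_simp [(Real.sqrt_pos.2 hs).ne']
  rw [Real.sq_sqrt hs.le, Real.sinh_eq]
  linear_combination Real.exp γ * hu

theorem transferMatrix_mul_hyperbolicFrame {γ u : ℝ} (hu : u * u = 1) :
    transferMatrix (2 * u * Real.cosh γ) * hyperbolicFrame γ u =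
      hyperbolicFrame γ u * hyperbolicForm γ u := by
  have he : Real.exp γ * Real.exp (-γ) = 1 := by rw [← Real.exp_add, add_neg_cancel, Real.exp_zero]
  rw [transferMatrix, hyperbolicFrame, hyperbolicForm, mul_fin_two, mul_fin_two, Real.cosh_eq]
  simp only [EmbeddingLike.apply_eq_iff_eq, vecCons_inj, and_true]
  set w := (√(2 * Real.sinh γ))⁻¹
  refine ⟨⟨?_, ?_⟩, ?_, ?_⟩
  · linear_combination Real.exp (-γ) * w * hu
  · ring
  · linear_combination -u * w * he
  · linear_combination -(u * u * w) * he - w * hu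

theorem cayley_mul_mul_conjTranspose (a b c d : ℂ) :
    cayley * !![a, b; c, d] * cayleyᴴ =
      (2 : ℂ)⁻¹ • !![a + d + I * (c - b), a - d + I * (b + c);
        a - d - I * (b + c), a + d - I * (c - b)] := by
  have h2 : ((√2 : ℝ) : ℂ)⁻¹ * ((√2 : ℝ) : ℂ)⁻¹ = 2⁻¹ := by
    rw [← mul_inv, ← ofReal_mul, Real.mul_self_sqrt zero_le_two, ofReal_ofNat]
  have hc : cayleyᴴ = ((√2 : ℝ) : ℂ)⁻¹ • !![1, 1; -I, I] := by
    ext i j; fin_cases i <;> fin_cases j <;> simp [cayley, conj_ofReal]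
  rw [hc, cayley]
  simp only [Matrix.smul_mul, Matrix.mul_smul, smul_smul, h2, mul_fin_two]
  congr 1
  simp only [EmbeddingLike.apply_eq_iff_eq, vecCons_inj, and_true]
  refine ⟨⟨?_, ?_⟩, ?_, ?_⟩ <;> ring_nf <;> simp only [I_sq] <;> ring

theorem cayley_mul_ellipticForm_mul_conjTranspose (k : ℝ) :
    cayley * (ellipticForm k).map ofRealHom * cayleyᴴ =
      !![exp (I * k), 0; 0, exp (-(I * k))] := by
  have hmap : (ellipticForm k).map ofRealHom =
      !![(Real.cos k : ℂ), -Real.sin k; Real.sin k, Real.cos k] := by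
    ext i j; fin_cases i <;> fin_cases j <;> simp [ellipticForm]
  have hplus : exp (I * k) = Real.cos k + Real.sin k * I := by
    rw [mul_comm, exp_mul_I, ← ofReal_cos, ← ofReal_sin]
  have hminus : exp (-(I * k)) = Real.cos k - Real.sin k * I := by
    rw [show -(I * k) = -k * I by ring, exp_mul_I, cos_neg, sin_neg, ← ofReal_cos, ← ofReal_sin]
    ring
  rw [hmap, cayley_mul_mul_conjTranspose, hplus, hminus]
  ext i j; fin_cases i <;> fin_cases j <;> simp <;> ring

theorem cayley_mul_hyperbolicForm_mul_conjTranspose (γ u : ℝ) :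
    cayley * (hyperbolicForm γ u).map ofRealHom * cayleyᴴ =
      !![((u * Real.cosh γ : ℝ) : ℂ), ((u * Real.sinh γ : ℝ) : ℂ);
        ((u * Real.sinh γ : ℝ) : ℂ), ((u * Real.cosh γ : ℝ) : ℂ)] := by
  have hmap : (hyperbolicForm γ u).map ofRealHom =
      !![((u * Real.exp γ : ℝ) : ℂ), 0; 0, ((u * Real.exp (-γ) : ℝ) : ℂ)] := by
    ext i j; fin_cases i <;> fin_cases j <;> simp [hyperbolicForm]
  rw [hmap, cayley_mul_mul_conjTranspose, Real.cosh_eq, Real.sinh_eq]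
  ext i j; fin_cases i <;> fin_cases j <;> simp <;> ring

variable {s h : ℕ}

noncomputable def frame (k : Fin s → ℝ) (γ u : Fin h → ℝ) :
    Fin s ⊕ Fin h → Matrix (Fin 2) (Fin 2) ℂ :=
  Sum.elim (fun i => (ellipticFrame (k i)).map ofRealHom)
    (fun j => (hyperbolicFrame (γ j) (u j)).map ofRealHom)

noncomputable def normalForm (k : Fin s → ℝ) (γ u : Fin h → ℝ) :
    Fin s ⊕ Fin h → Matrix (Fin 2) (Fin 2) ℂ :=
  Sum.elim (fun i => (ellipticForm (k i)).map ofRealHom)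
    (fun j => (hyperbolicForm (γ j) (u j)).map ofRealHom)

theorem isUnit_det_frame {k : Fin s → ℝ} {γ u : Fin h → ℝ} (hk : ∀ i, 0 < Real.sin (k i))
    (hγ : ∀ j, 0 < γ j) (hu : ∀ j, u j * u j = 1) (x : Fin s ⊕ Fin h) :
    IsUnit (frame k γ u x).det := by
  rcases x with i | j
  · simp only [frame, Sum.elim_inl, ← RingHom.mapMatrix_apply, ← RingHom.map_det,
      det_ellipticFrame (hk i), map_one, isUnit_one]
  · simp only [frame, Sum.elim_inr, ← RingHom.mapMatrix_apply, ← RingHom.map_det,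
      det_hyperbolicFrame (hγ j) (hu j), map_one, isUnit_one]

theorem transferMatrix_mul_frame {k : Fin s → ℝ} {γ u : Fin h → ℝ} {t : Fin s ⊕ Fin h → ℂ}
    (hk : ∀ i, 0 < Real.sin (k i)) (hu : ∀ j, u j * u j = 1)
    (htk : ∀ i, t (Sum.inl i) = ((2 * Real.cos (k i) : ℝ) : ℂ))
    (htγ : ∀ j, t (Sum.inr j) = ((2 * u j * Real.cosh (γ j) : ℝ) : ℂ)) (x : Fin s ⊕ Fin h) :
    transferMatrix (t x) * frame k γ u x = frame k γ u x * normalForm k γ u x := by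
  rcases x with i | j
  · rw [htk, ← ofRealHom_eq_coe]
    simp only [frame, normalForm, Sum.elim_inl, ← transferMatrix_map, ← Matrix.map_mul,
      transferMatrix_mul_ellipticFrame (hk i)]
  · rw [htγ, ← ofRealHom_eq_coe]
    simp only [frame, normalForm, Sum.elim_inr, ← transferMatrix_map, ← Matrix.map_mul,
      transferMatrix_mul_hyperbolicFrame (hu j)]

theorem Mmat_eq_fromBlocks_mul_fromBlocksDiagonal_frame (k : Fin s → ℝ) (γ u : Fin h → ℝ)
    (U : Matrix (Fin s ⊕ Fin h) (Fin s ⊕ Fin h) ℂ) :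
    Mmat s h k γ u U = fromBlocks U 0 0 U * fromBlocksDiagonal (frame k γ u) := by
  rw [Mmat, frame, fromBlocksDiagonal_sumElim]
  simp [ellipticFrame, hyperbolicFrame]

theorem CayleyN_eq_fromBlocksDiagonal :
    CayleyN s h = fromBlocksDiagonal fun _ => cayley := by
  rw [CayleyN, fromBlocksDiagonal, cayley]
  simp [← diagonal_one, fromBlocks_smul, ← diagonal_smul]

theorem CayleyN_mul_fromBlocksDiagonal_normalForm_mul_conjTranspose (k : Fin s → ℝ)
    (γ u : Fin h → ℝ) :
    CayleyN s h * fromBlocksDiagonal (normalForm k γ u) * (CayleyN s h)ᴴ =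
      fromBlocks
        (fromBlocks (diagonal fun i => exp (I * k i)) 0 0
          (diagonal fun j => ((u j * Real.cosh (γ j) : ℝ) : ℂ)))
        (fromBlocks 0 0 0 (diagonal fun j => ((u j * Real.sinh (γ j) : ℝ) : ℂ)))
        (fromBlocks 0 0 0 (diagonal fun j => ((u j * Real.sinh (γ j) : ℝ) : ℂ)))
        (fromBlocks (diagonal fun i => exp (-(I * k i))) 0 0
          (diagonal fun j => ((u j * Real.cosh (γ j) : ℝ) : ℂ))) := by
  have hconj : ((fun _ => cayley) * normalForm k γ u * fun _ => cayleyᴴ) = Sum.elim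
      (fun i => !![exp (I * k i), 0; 0, exp (-(I * k i))])
      (fun j => !![((u j * Real.cosh (γ j) : ℝ) : ℂ), ((u j * Real.sinh (γ j) : ℝ) : ℂ);
        ((u j * Real.sinh (γ j) : ℝ) : ℂ), ((u j * Real.cosh (γ j) : ℝ) : ℂ)]) := by
    ext1 (i | j)
    · exact cayley_mul_ellipticForm_mul_conjTranspose (k i)
    · exact cayley_mul_hyperbolicForm_mul_conjTranspose (γ j) (u j)
  rw [CayleyN_eq_fromBlocksDiagonal, fromBlocksDiagonal_conjTranspose, fromBlocksDiagonal_mul,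
    fromBlocksDiagonal_mul, hconj, fromBlocksDiagonal_sumElim]
  simp

end FreeTransfer

open FreeTransfer

/-- Normal form of the free transfer matrix in U(N,N):
    C_N M⁻¹ 𝒯⁰ M C_N* = [[e^{ik},0,0,0],[0,u cosh γ,0,u sinh γ],
    [0,0,e^{−ik},0],[0,u sinh γ,0,u cosh γ]]. -/
theorem stmt13 (s h : ℕ) (lam : Fin s ⊕ Fin h → ℝ) (E : ℝ)
    (k : Fin s → ℝ) (γ u : Fin h → ℝ)
    (U : Matrix (Fin s ⊕ Fin h) (Fin s ⊕ Fin h) ℂ)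
    (hU : U ∈ Matrix.unitaryGroup (Fin s ⊕ Fin h) ℂ)
    (hk : ∀ i, k i ∈ Set.Ioo 0 Real.pi ∧ E = -2 * Real.cos (k i) + lam (Sum.inl i))
    (hγ : ∀ j, 0 < γ j) (hu : ∀ j, u j = 1 ∨ u j = -1)
    (hEh : ∀ j, E = -2 * u j * Real.cosh (γ j) + lam (Sum.inr j)) :
    ∀ (W : Matrix (Fin s ⊕ Fin h) (Fin s ⊕ Fin h) ℂ),
      W = U * Matrix.diagonal (fun i => (lam i : ℂ)) * Uᴴ →
    CayleyN s h * (Mmat s h k γ u U)⁻¹ * Matrix.fromBlocks (W - (E : ℂ) • 1) (-1) 1 0 *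
        Mmat s h k γ u U * (CayleyN s h)ᴴ =
      Matrix.fromBlocks
        (Matrix.fromBlocks (Matrix.diagonal fun i => Complex.exp (Complex.I * (k i))) 0 0
          (Matrix.diagonal fun j => ((u j * Real.cosh (γ j) : ℝ) : ℂ)))
        (Matrix.fromBlocks 0 0 0
          (Matrix.diagonal fun j => ((u j * Real.sinh (γ j) : ℝ) : ℂ)))
        (Matrix.fromBlocks 0 0 0
          (Matrix.diagonal fun j => ((u j * Real.sinh (γ j) : ℝ) : ℂ)))
        (Matrix.fromBlocks (Matrix.diagonal fun i => Complex.exp (-(Complex.I * (k i)))) 0 0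
          (Matrix.diagonal fun j => ((u j * Real.cosh (γ j) : ℝ) : ℂ))) := by
  rintro W rfl
  have hk' : ∀ i, 0 < Real.sin (k i) := fun i =>
    Real.sin_pos_of_pos_of_lt_pi (hk i).1.1 (hk i).1.2
  have hu' : ∀ j, u j * u j = 1 := fun j => mul_self_eq_one_iff.2 (hu j)
  have htk : ∀ i, (lam (Sum.inl i) : ℂ) - E = ((2 * Real.cos (k i) : ℝ) : ℂ) := fun i => by
    simp [(hk i).2]
  have htγ : ∀ j, (lam (Sum.inr j) : ℂ) - E = ((2 * u j * Real.cosh (γ j) : ℝ) : ℂ) := fun j => by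
    simp [hEh j]
  calc _ = CayleyN s h * ((fromBlocksDiagonal (frame k γ u))⁻¹ * ((fromBlocks U 0 0 U)⁻¹ *
          fromBlocks (U * diagonal (fun i => (lam i : ℂ)) * Uᴴ - (E : ℂ) • 1) (-1) 1 0 *
          fromBlocks U 0 0 U) * fromBlocksDiagonal (frame k γ u)) * (CayleyN s h)ᴴ := by
        rw [Mmat_eq_fromBlocks_mul_fromBlocksDiagonal_frame, Matrix.mul_inv_rev]
        simp only [mul_assoc]
    _ = CayleyN s h * fromBlocksDiagonal (normalForm k γ u) * (CayleyN s h)ᴴ := by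
        rw [fromBlocks_unitary_conj_transfer hU, fromBlocks_diagonal_neg_one_one_zero,
          inv_mul_fromBlocksDiagonal_mul (isUnit_det_frame hk' hγ hu')
            (transferMatrix_mul_frame hk' hu' htk htγ)]
    _ = _ := CayleyN_mul_fromBlocksDiagonal_normalForm_mul_conjTranspose k γ u
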